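/- For all integers r ≥ 1, j ≥ 1 and n with n ≥ 2r−j and 1 ≤ r ≤ n, the q-integer [n]_q divides the product [j]_q · [n choose r]_{q²} · [2n+j−1−2r choose n−1]_q in the polynomial ring ℤ[q]. (Equivalently, T_r^{(j)}(n,q) = q^{r²−r}·[n choose r]_{q²}·[2n+j−1−2r choose n−1]_q·[j]_q/[n]_q is a polynomial for n ≥ 2r−j.) -/

import Mathlib

open Polynomial

/-- The q-integer `[n]_q = 1 + q + ⋯ + q^{n−1}` as a polynomial in `ℤ[q]`
(with `[0]_q = 0`). -/
noncomputable def qIntP (n : ℕ) : Polynomial ℤ := ∑ i ∈ Finset.range n, Polynomial.X ^ i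

/-- The q-factorial `[n]_q! = [1]_q[2]_q⋯[n]_q` in `ℤ[q]`. -/
noncomputable def qFactP (n : ℕ) : Polynomial ℤ := ∏ i ∈ Finset.range n, qIntP (i + 1)

/-- The Gaussian binomial coefficient `[m choose k]_q = [m]_q!/([k]_q![m−k]_q!)`
as a polynomial in `ℤ[q]` (the division, by a monic polynomial, is exact),
and `0` if `k > m`. -/
noncomputable def qBinomP (m k : ℕ) : Polynomial ℤ :=
  if k ≤ m then qFactP m /ₘ (qFactP k * qFactP (m - k)) else 0

/-- The Gaussian binomial coefficient `[m choose k]_{q²}`, i.e. `[m choose k]_q`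
with `q` replaced by `q²`. -/
noncomputable def qBinomP2 (m k : ℕ) : Polynomial ℤ := (qBinomP m k).comp (Polynomial.X ^ 2)

/-!
`[n]_q` is the product of the cyclotomic polynomials `Φ_d` with `1 < d ∣ n`, which are pairwise
distinct primes of `ℤ[q]`, so it suffices that each such `Φ_d` divides the product. The
multiplicity of `Φ_d` in `[m]_q!` is `⌊m/d⌋`, hence `Φ_d` divides `[m choose k]_q` as soon as
adding `k` and `m - k` in base `d` carries out of the last digit (a q-analogue of Kummer's theorem).
If `d ∣ j`, then `Φ_d ∣ [j]_q`. If `d ∣ 2r` but `d ∤ j`, then `n - 1 ≡ -1` and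
`n + j - 2r ≡ j ≢ 0 (mod d)`, a carry in `[2n+j-1-2r choose n-1]_q`. If `d ∤ 2r`, then
`e = d / gcd(d, 2)` divides `n` but not `r`, a carry in `[n choose r]_q` at `e`, and
`Φ_d(q) ∣ Φ_e(q²)`.
-/

theorem Nat.sub_one_mod_of_dvd {d n : ℕ} (hd : 0 < d) (hn : 0 < n) (hdn : d ∣ n) :
    (n - 1) % d = d - 1 := by
  obtain ⟨s, rfl⟩ := hdn
  obtain ⟨t, rfl⟩ : ∃ t, s = t + 1 :=
    Nat.exists_eq_succ_of_ne_zero (by rintro rfl; simp at hn)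
  rw [show d * (t + 1) - 1 = d - 1 + d * t by rw [mul_add, mul_one]; omega,
    Nat.add_mul_mod_self_left, Nat.mod_eq_of_lt (by omega)]

section QBinomial

theorem qIntP_add (a b : ℕ) : qIntP (a + b) = qIntP a + X ^ a * qIntP b := by
  simp only [qIntP, Finset.sum_range_add, Finset.mul_sum, pow_add]

theorem qFactP_succ (n : ℕ) : qFactP (n + 1) = qFactP n * qIntP (n + 1) :=
  Finset.prod_range_succ _ _

theorem qFactP_monic (n : ℕ) : (qFactP n).Monic :=
  monic_prod_of_monic _ _ fun i _ => monic_geom_sum_X i.succ_ne_zero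

theorem qFactP_mul_qFactP_dvd (k l : ℕ) : qFactP k * qFactP l ∣ qFactP (k + l) := by
  induction l generalizing k with
  | zero => simp [qFactP]
  | succ l ihl =>
    induction k with
    | zero => simp [qFactP]
    | succ k ihk =>
      have hpascal : qFactP (k + 1 + (l + 1)) = qFactP (k + (l + 1)) * qIntP (k + 1)
          + X ^ (k + 1) * (qFactP (k + 1 + l) * qIntP (l + 1)) := by
        rw [show k + 1 + (l + 1) = k + (l + 1) + 1 by omega, qFactP_succ,
          show k + (l + 1) + 1 = (k + 1) + (l + 1) by omega, qIntP_add,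
          show k + (l + 1) = k + 1 + l by omega]
        ring
      rw [hpascal]
      refine dvd_add ?_ (dvd_mul_of_dvd_right ?_ _)
      · rw [qFactP_succ k, mul_right_comm]
        exact mul_dvd_mul_right ihk _
      · rw [qFactP_succ l, ← mul_assoc]
        exact mul_dvd_mul_right (ihl (k + 1)) _

theorem qBinomP_mul_qFactP_mul_qFactP {m k : ℕ} (hk : k ≤ m) :
    qBinomP m k * (qFactP k * qFactP (m - k)) = qFactP m := by
  obtain ⟨c, hc⟩ := Nat.add_sub_of_le hk ▸ qFactP_mul_qFactP_dvd k (m - k)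
  rw [qBinomP, if_pos hk, hc,
    mul_divByMonic_cancel_left c ((qFactP_monic k).mul (qFactP_monic _)), mul_comm]

theorem qIntP_eq_prod_cyclotomic {n : ℕ} (hn : 0 < n) :
    qIntP n = ∏ d ∈ n.divisors.erase 1, cyclotomic d ℤ := by
  rw [qIntP, prod_cyclotomic_eq_geom_sum hn ℤ]

theorem cyclotomic_dvd_qIntP {d a : ℕ} (hd : d ≠ 1) (hda : d ∣ a) :
    cyclotomic d ℤ ∣ qIntP a := by
  rcases a.eq_zero_or_pos with rfl | ha
  · simp [qIntP]
  rw [qIntP_eq_prod_cyclotomic ha]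
  exact Finset.dvd_prod_of_mem _ (by simp [hd, hda, ha.ne'])

end QBinomial

section Cyclotomic

theorem prime_cyclotomic_int {d : ℕ} (hd : 0 < d) : Prime (cyclotomic d ℤ) :=
  UniqueFactorizationMonoid.irreducible_iff_prime.mp (cyclotomic.irreducible hd)

theorem emultiplicity_cyclotomic_cyclotomic {d e : ℕ} (hd : 0 < d) (he : 0 < e) :
    emultiplicity (cyclotomic d ℤ) (cyclotomic e ℤ) = if d = e then 1 else 0 := by
  split_ifs with hde
  · subst hde
    simpa using emultiplicity_pow_self_of_prime (prime_cyclotomic_int hd) 1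
  · refine emultiplicity_eq_zero.mpr fun hdvd => hde (cyclotomic_injective (R := ℤ) ?_)
    exact eq_of_monic_of_associated (cyclotomic.monic d ℤ) (cyclotomic.monic e ℤ)
      ((cyclotomic.irreducible hd).associated_of_dvd (cyclotomic.irreducible he) hdvd)

theorem cyclotomic_mul_dvd_expand {p : ℕ} (hp : p.Prime) (n : ℕ) (R : Type*) [CommRing R] :
    cyclotomic (n * p) R ∣ expand R p (cyclotomic n R) := by
  by_cases hpn : p ∣ n
  · rw [cyclotomic_expand_eq_cyclotomic hp hpn]
  · rw [cyclotomic_expand_eq_cyclotomic_mul hp hpn]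
    exact dvd_mul_right _ _

theorem cyclotomic_dvd_expand_self {p n : ℕ} (hp : p.Prime) (hpn : ¬ p ∣ n) (R : Type*)
    [CommRing R] : cyclotomic n R ∣ expand R p (cyclotomic n R) := by
  rw [cyclotomic_expand_eq_cyclotomic_mul hp hpn]
  exact dvd_mul_left _ _

theorem prod_cyclotomic_dvd_of_forall_dvd {s : Finset ℕ} {f : ℤ[X]}
    (h : ∀ d ∈ s, cyclotomic d ℤ ∣ f) : ∏ d ∈ s, cyclotomic d ℤ ∣ f := by
  -- `Φ₁ = X - 1` and `Φ₂ = X + 1` are not coprime in `ℤ[X]`, so we argue in `ℚ[X]`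
  have hmonic : (∏ d ∈ s, cyclotomic d ℤ).Monic :=
    monic_prod_of_monic _ _ fun d _ => cyclotomic.monic d ℤ
  rw [← map_dvd_map (Int.castRingHom ℚ) Int.cast_injective hmonic, Polynomial.map_prod]
  simp only [map_cyclotomic_int]
  refine Finset.prod_dvd_of_coprime (fun a _ b _ hab => cyclotomic.isCoprime_rat hab)
    fun d hd => by simpa only [map_cyclotomic_int] using map_dvd (Int.castRingHom ℚ) (h d hd)

end Cyclotomic

section Multiplicity

variable {d : ℕ}

theorem emultiplicity_cyclotomic_qIntP (hd : 1 < d) {a : ℕ} (ha : 0 < a) :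
    emultiplicity (cyclotomic d ℤ) (qIntP a) = if d ∣ a then 1 else 0 := by
  rw [qIntP_eq_prod_cyclotomic ha, Finset.emultiplicity_prod (prime_cyclotomic_int (by omega)),
    Finset.sum_congr rfl fun e he => emultiplicity_cyclotomic_cyclotomic (by omega)
    (Nat.pos_of_mem_divisors (Finset.mem_of_mem_erase he)), Finset.sum_ite_eq]
  simp [hd.ne', ha.ne']

theorem emultiplicity_cyclotomic_qFactP (hd : 1 < d) (m : ℕ) :
    emultiplicity (cyclotomic d ℤ) (qFactP m) = (m / d : ℕ) := by
  rw [qFactP, Finset.emultiplicity_prod (prime_cyclotomic_int (by omega)),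
    Finset.sum_congr rfl fun i _ => emultiplicity_cyclotomic_qIntP hd i.succ_pos,
    Finset.sum_boole, Nat.card_multiples]

theorem cyclotomic_dvd_qBinomP_of_le_mod_add_mod (hd : 1 < d) {m k : ℕ} (hk : k ≤ m)
    (hcarry : d ≤ k % d + (m - k) % d) : cyclotomic d ℤ ∣ qBinomP m k := by
  have hmult := congrArg (emultiplicity (cyclotomic d ℤ)) (qBinomP_mul_qFactP_mul_qFactP hk)
  rw [emultiplicity_mul (prime_cyclotomic_int (by omega)),
    emultiplicity_mul (prime_cyclotomic_int (by omega)), emultiplicity_cyclotomic_qFactP hd,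
    emultiplicity_cyclotomic_qFactP hd, emultiplicity_cyclotomic_qFactP hd] at hmult
  have hdiv := Nat.add_div_eq_of_le_mod_add_mod hcarry (by omega : 0 < d)
  rw [Nat.add_sub_of_le hk] at hdiv
  by_contra hndvd
  rw [← emultiplicity_eq_zero] at hndvd
  rw [hndvd, zero_add] at hmult
  norm_cast at hmult
  omega

theorem cyclotomic_dvd_qBinomP_of_not_dvd (hd : 1 < d) {n k : ℕ} (hdn : d ∣ n) (hk : k ≤ n)
    (hdk : ¬ d ∣ k) : cyclotomic d ℤ ∣ qBinomP n k :=
  cyclotomic_dvd_qBinomP_of_le_mod_add_mod hd hk <|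
    Nat.le_mod_add_mod_of_dvd_add_of_not_dvd (by rwa [Nat.add_sub_cancel' hk]) hdk

theorem cyclotomic_dvd_qBinomP2 (hd : 1 < d) {n r : ℕ} (hdn : d ∣ n) (hr : r ≤ n)
    (hdr : ¬ d ∣ 2 * r) : cyclotomic d ℤ ∣ qBinomP2 n r := by
  rw [qBinomP2, ← expand_eq_comp_X_pow]
  by_cases h2d : 2 ∣ d
  · obtain ⟨e, rfl⟩ := h2d
    have her : ¬ e ∣ r := fun h => hdr (mul_dvd_mul_left 2 h)
    have he : 1 < e := by
      have : e ≠ 1 := by rintro rfl; exact her (one_dvd r)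
      omega
    have hdvd : cyclotomic e ℤ ∣ qBinomP n r :=
      cyclotomic_dvd_qBinomP_of_not_dvd he (dvd_of_mul_left_dvd hdn) hr her
    rw [mul_comm 2 e]
    exact (cyclotomic_mul_dvd_expand Nat.prime_two e ℤ).trans
      ((expand ℤ 2).toRingHom.map_dvd hdvd)
  · have hdvd : cyclotomic d ℤ ∣ qBinomP n r :=
      cyclotomic_dvd_qBinomP_of_not_dvd hd hdn hr fun h => hdr (h.mul_left 2)
    exact (cyclotomic_dvd_expand_self Nat.prime_two h2d ℤ).trans
      ((expand ℤ 2).toRingHom.map_dvd hdvd)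

end Multiplicity

theorem qIntP_dvd_Trj_general (n r j : ℕ) (hr : 1 ≤ r) (hrn : r ≤ n)
    (hnrj : 2 * (r : ℤ) - (j : ℤ) ≤ (n : ℤ)) :
    qIntP n ∣ qIntP j * qBinomP2 n r * qBinomP (2 * n + j - 1 - 2 * r) (n - 1) := by
  have hn : 0 < n := by omega
  rw [qIntP_eq_prod_cyclotomic hn]
  refine prod_cyclotomic_dvd_of_forall_dvd fun d hd => ?_
  obtain ⟨hd1, hdn, -⟩ : d ≠ 1 ∧ d ∣ n ∧ n ≠ 0 := by simpa using hd
  have hd : 1 < d := lt_of_le_of_ne (Nat.pos_of_dvd_of_pos hdn hn) hd1.symm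
  by_cases hdj : d ∣ j
  · exact dvd_mul_of_dvd_left (dvd_mul_of_dvd_left (cyclotomic_dvd_qIntP hd1 hdj) _) _
  by_cases hdr : d ∣ 2 * r
  · refine dvd_mul_of_dvd_right (cyclotomic_dvd_qBinomP_of_le_mod_add_mod hd (by omega) ?_) _
    have hcompl : ¬ d ∣ 2 * n + j - 1 - 2 * r - (n - 1) := fun h => hdj <| by
      have hsum := dvd_add h hdr
      rwa [show 2 * n + j - 1 - 2 * r - (n - 1) + 2 * r = n + j by omega,
        Nat.dvd_add_right hdn] at hsum
    have hpred := Nat.sub_one_mod_of_dvd (by omega) hn hdn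
    have hmod := Nat.pos_of_ne_zero (mt Nat.dvd_of_mod_eq_zero hcompl)
    omega
  · exact dvd_mul_of_dvd_left (dvd_mul_of_dvd_right (cyclotomic_dvd_qBinomP2 hd hdn hrn hdr) _) _

/-- For `r ≥ 1`, `j ≥ 1` and `n ≥ 2r−j` with `1 ≤ r ≤ n`, the q-integer `[n]_q`
divides `[j]_q·[n choose r]_{q²}·[2n+j−1−2r choose n−1]_q` in `ℤ[q]`;
equivalently `T_r^{(j)}(n,q) = q^{r²−r}·[n choose r]_{q²}·[2n+j−1−2r choose n−1]_q·[j]_q/[n]_q`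
is a polynomial for `n ≥ 2r−j`. -/
theorem qIntP_dvd_Trj (n r j : ℕ) (hr : 1 ≤ r) (hj : 1 ≤ j) (hrn : r ≤ n)
    (hnrj : 2 * (r : ℤ) - (j : ℤ) ≤ (n : ℤ)) :
    qIntP n ∣ qIntP j * qBinomP2 n r * qBinomP (2 * n + j - 1 - 2 * r) (n - 1) :=
  qIntP_dvd_Trj_general n r j hr hrn hnrj
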